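/- Let Σ be a positive definite D×D real matrix, μ, b ∈ ℝ^D, and A ∈ ℝ^{D×R} a matrix of full column rank with R ≤ D. Set Σ̃ = (AᵀΣ⁻¹A)⁻¹, μ̃ = Σ̃AᵀΣ⁻¹(μ − b), P = Σ⁻¹ − Σ⁻¹AΣ̃AᵀΣ⁻¹, and s̃ = (2π)^{(R−D)/2} (det Σ̃)^{1/2} (det Σ)^{−1/2} exp(−(1/2)(μ−b)ᵀP(μ−b)). Then AᵀΣ⁻¹A is positive definite, and for every u ∈ ℝ^R, N_D(Au + b; μ, Σ) = s̃ · N_R(u; μ̃, Σ̃). In particular, if R = D and A is invertible, then Σ̃ = A⁻¹ΣA⁻ᵀ, μ̃ = A⁻¹(μ − b), and s̃ = |det A|⁻¹. -/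

import Mathlib

open Real Matrix

/-- The `D`-dimensional Gaussian density
`N_D(x; μ, Σ) = (2π)^(−D/2) (det Σ)^(−1/2) exp(−(1/2)(x−μ)ᵀΣ⁻¹(x−μ))`. -/
noncomputable def gaussDensity {D : ℕ} (μ : Fin D → ℝ) (C : Matrix (Fin D) (Fin D) ℝ)
    (x : Fin D → ℝ) : ℝ :=
  (2 * Real.pi) ^ (-(D : ℝ) / 2) * C.det ^ (-(1 : ℝ) / 2) *
    Real.exp (-(1 / 2) * ((x - μ) ⬝ᵥ C⁻¹.mulVec (x - μ)))

/-! Writing `v = μ - b`, the exponent of `N_D(Au + b; μ, Σ)` is the quadratic form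
`(Au - v)ᵀ Σ⁻¹ (Au - v)`. Since `A` is injective, `M = AᵀΣ⁻¹A` is positive definite, and
completing the square in `u` splits the form as `(u - μ̃)ᵀ M (u - μ̃) + vᵀ P v` with
`μ̃ = M⁻¹AᵀΣ⁻¹v`; the normalizing constants then regroup into `s̃`. When `A` is square and
invertible, `Σ⁻¹ A M⁻¹ Aᵀ Σ⁻¹ = Σ⁻¹`, so `P = 0` and `det Σ̃ = det Σ / (det A)²`. -/

namespace Matrix

variable {m n : Type*} [Fintype n]

theorem mulVec_injective_of_rank_eq_card {K : Type*} [Field K] {A : Matrix m n K}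
    (hA : A.rank = Fintype.card n) : Function.Injective A.mulVec := by
  have h := LinearMap.finrank_range_add_finrank_ker A.mulVecLin
  rw [Module.finrank_fintype_fun_eq_card] at h
  change A.rank + _ = _ at h
  have hker : Module.finrank K (LinearMap.ker A.mulVecLin) = 0 := by omega
  exact LinearMap.ker_eq_bot.mp (Submodule.finrank_eq_zero.mp hker)

section CompleteSquare

variable [Fintype m] {α : Type*} [CommRing α]

theorem IsSymm.dotProduct_mulVec_comm {Q : Matrix m m α} (hQ : Q.IsSymm) (x y : m → α) :
    x ⬝ᵥ Q *ᵥ y = y ⬝ᵥ Q *ᵥ x := by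
  rw [dotProduct_mulVec, ← mulVec_transpose, hQ.eq, dotProduct_comm]

theorem IsSymm.completeSquare [DecidableEq n] {Q : Matrix m m α} (hQ : Q.IsSymm)
    {A : Matrix m n α} (hM : IsUnit (Aᵀ * Q * A).det) (u : n → α) (v : m → α) :
    (A *ᵥ u - v) ⬝ᵥ Q *ᵥ (A *ᵥ u - v) =
      (u - (Aᵀ * Q * A)⁻¹ *ᵥ Aᵀ *ᵥ Q *ᵥ v) ⬝ᵥ
          (Aᵀ * Q * A) *ᵥ (u - (Aᵀ * Q * A)⁻¹ *ᵥ Aᵀ *ᵥ Q *ᵥ v) +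
        v ⬝ᵥ (Q - Q * A * (Aᵀ * Q * A)⁻¹ * Aᵀ * Q) *ᵥ v := by
  set M := Aᵀ * Q * A
  set w := M⁻¹ *ᵥ Aᵀ *ᵥ Q *ᵥ v
  have hMw : M *ᵥ w = Aᵀ *ᵥ Q *ᵥ v := by
    rw [mulVec_mulVec, mul_nonsing_inv _ hM, one_mulVec]
  have hMsymm : M.IsSymm := by
    simp only [M, IsSymm, transpose_mul, transpose_transpose, hQ.eq, Matrix.mul_assoc]
  have huu : u ⬝ᵥ M *ᵥ u = A *ᵥ u ⬝ᵥ Q *ᵥ (A *ᵥ u) := by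
    rw [← mulVec_mulVec, ← mulVec_mulVec, dotProduct_transpose_mulVec, dotProduct_comm]
  have huw : u ⬝ᵥ M *ᵥ w = A *ᵥ u ⬝ᵥ Q *ᵥ v := by
    rw [hMw, dotProduct_transpose_mulVec, dotProduct_comm]
  have hww : w ⬝ᵥ M *ᵥ w = v ⬝ᵥ (Q * A * M⁻¹ * Aᵀ * Q) *ᵥ v := by
    rw [hMw, dotProduct_transpose_mulVec, dotProduct_comm, hQ.dotProduct_mulVec_comm]
    simp only [w, mulVec_mulVec, Matrix.mul_assoc]
  simp only [mulVec_sub, sub_mulVec, sub_dotProduct, dotProduct_sub, huu, huw, hww,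
    hMsymm.dotProduct_mulVec_comm w u, hQ.dotProduct_mulVec_comm v (A *ᵥ u)]
  ring

end CompleteSquare

section Square

variable [DecidableEq n] {α : Type*} [CommRing α] {B Q : Matrix n n α}

theorem inv_transpose_mul_mul :
    (Bᵀ * Q * B)⁻¹ = B⁻¹ * Q⁻¹ * B⁻¹ᵀ := by
  rw [mul_inv_rev, mul_inv_rev, transpose_nonsing_inv, Matrix.mul_assoc]

theorem inv_transpose_mul_mul_mulVec (hB : IsUnit B.det) (hQ : IsUnit Q.det) (v : n → α) :
    (Bᵀ * Q * B)⁻¹ *ᵥ Bᵀ *ᵥ Q *ᵥ v = B⁻¹ *ᵥ v := by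
  have hBt : IsUnit Bᵀ.det := by rwa [det_transpose]
  rw [inv_transpose_mul_mul, mulVec_mulVec, mulVec_mulVec, Matrix.mul_assoc _ B⁻¹ᵀ,
    transpose_nonsing_inv, nonsing_inv_mul _ hBt, Matrix.mul_one, Matrix.mul_assoc,
    nonsing_inv_mul _ hQ, Matrix.mul_one]

theorem mul_mul_inv_transpose_mul_mul_mul (hB : IsUnit B.det) (hQ : IsUnit Q.det) :
    Q * B * (Bᵀ * Q * B)⁻¹ * Bᵀ * Q = Q := by
  have hBt : IsUnit Bᵀ.det := by rwa [det_transpose]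
  rw [inv_transpose_mul_mul, transpose_nonsing_inv]
  simp only [Matrix.mul_assoc, nonsing_inv_mul_cancel_left _ _ hBt,
    mul_nonsing_inv_cancel_left _ _ hB, mul_nonsing_inv_cancel_left _ _ hQ]

end Square

theorem det_inv_transpose_mul_mul {K : Type*} [Field K] [DecidableEq n] (B Q : Matrix n n K) :
    (Bᵀ * Q * B)⁻¹.det = (Q.det * B.det ^ 2)⁻¹ := by
  rw [det_nonsing_inv, Ring.inverse_eq_inv', det_mul, det_mul, det_transpose]
  ring

end Matrix

theorem gaussDensity_eq_div_sqrt_det {D : ℕ} (μ : Fin D → ℝ) {C : Matrix (Fin D) (Fin D) ℝ}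
    (hC : 0 ≤ C.det) (x : Fin D → ℝ) :
    gaussDensity μ C x =
      (2 * π) ^ (-(D : ℝ) / 2) / √C.det * exp (-(1 / 2) * ((x - μ) ⬝ᵥ C⁻¹ *ᵥ (x - μ))) := by
  rw [gaussDensity, neg_div 2 (1 : ℝ), rpow_neg hC, ← sqrt_eq_rpow, div_eq_mul_inv _ √C.det]

theorem gaussDensity_eq_mul_of_quadForm_eq {D R : ℕ} {μ x : Fin D → ℝ}
    {C : Matrix (Fin D) (Fin D) ℝ} (hC : 0 ≤ C.det) {ν y : Fin R → ℝ}
    {C' : Matrix (Fin R) (Fin R) ℝ} (hC' : 0 < C'.det) {c : ℝ}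
    (h : (x - μ) ⬝ᵥ C⁻¹ *ᵥ (x - μ) = (y - ν) ⬝ᵥ C'⁻¹ *ᵥ (y - ν) + c) :
    gaussDensity μ C x =
      (2 * π) ^ (((R : ℝ) - D) / 2) * √C'.det / √C.det * exp (-(1 / 2) * c) *
        gaussDensity ν C' y := by
  have hpow : (2 * π) ^ (-(D : ℝ) / 2) =
      (2 * π) ^ (((R : ℝ) - D) / 2) * (2 * π) ^ (-(R : ℝ) / 2) := by
    rw [← rpow_add (by positivity)]
    ring_nf
  have hC'sqrt : √C'.det ≠ 0 := (sqrt_pos.mpr hC').ne'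
  rw [gaussDensity_eq_div_sqrt_det _ hC, gaussDensity_eq_div_sqrt_det _ hC'.le, h, mul_add,
    exp_add, hpow]
  field_simp

theorem stmt_14_general (D R : ℕ)
    (C : Matrix (Fin D) (Fin D) ℝ) (hC : C.PosDef)
    (μ b : Fin D → ℝ)
    (A : Matrix (Fin D) (Fin R) ℝ) (hA : A.rank = R)
    (Ct : Matrix (Fin R) (Fin R) ℝ) (hCt : Ct = (Aᵀ * C⁻¹ * A)⁻¹)
    (mt : Fin R → ℝ) (hmt : mt = Ct.mulVec (Aᵀ.mulVec (C⁻¹.mulVec (μ - b))))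
    (P : Matrix (Fin D) (Fin D) ℝ) (hP : P = C⁻¹ - C⁻¹ * A * Ct * Aᵀ * C⁻¹)
    (st : ℝ) (hst : st = (2 * Real.pi) ^ (((R : ℝ) - D) / 2) *
      Real.sqrt Ct.det / Real.sqrt C.det *
      Real.exp (-(1 / 2) * ((μ - b) ⬝ᵥ P.mulVec (μ - b)))) :
    (Aᵀ * C⁻¹ * A).PosDef ∧
    (∀ u : Fin R → ℝ, gaussDensity μ C (A.mulVec u + b) = st * gaussDensity mt Ct u) ∧
    (∀ A' : Matrix (Fin D) (Fin D) ℝ, IsUnit A'.det →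
      (A'ᵀ * C⁻¹ * A')⁻¹ = A'⁻¹ * C * (A'⁻¹)ᵀ ∧
      ((A'ᵀ * C⁻¹ * A')⁻¹).mulVec (A'ᵀ.mulVec (C⁻¹.mulVec (μ - b))) =
        A'⁻¹.mulVec (μ - b) ∧
      (2 * Real.pi) ^ (((D : ℝ) - D) / 2) *
          Real.sqrt ((A'ᵀ * C⁻¹ * A')⁻¹).det / Real.sqrt C.det *
          Real.exp (-(1 / 2) * ((μ - b) ⬝ᵥ
            (C⁻¹ - C⁻¹ * A' * (A'ᵀ * C⁻¹ * A')⁻¹ * A'ᵀ * C⁻¹).mulVec (μ - b))) =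
        |A'.det|⁻¹) := by
  subst hCt hmt hP hst
  have hM : (Aᵀ * C⁻¹ * A).PosDef := by
    simpa only [conjTranspose_eq_transpose_of_trivial] using hC.inv.conjTranspose_mul_mul_same
      (mulVec_injective_of_rank_eq_card (hA.trans (Fintype.card_fin R).symm))
  have hCinv : IsUnit C⁻¹.det := hC.inv.det_pos.ne'.isUnit
  refine ⟨hM, fun u => ?_, fun A' hA' => ⟨?_, inv_transpose_mul_mul_mulVec hA' hCinv _, ?_⟩⟩
  · refine gaussDensity_eq_mul_of_quadForm_eq hC.det_pos.le hM.inv.det_pos ?_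
    rw [nonsing_inv_nonsing_inv _ hM.det_pos.ne'.isUnit, ← sub_sub_eq_add_sub]
    exact (isHermitian_iff_isSymm.mp hC.inv.isHermitian).completeSquare
      hM.det_pos.ne'.isUnit u (μ - b)
  · rw [inv_transpose_mul_mul, nonsing_inv_nonsing_inv _ hC.det_pos.ne'.isUnit]
  · have hP : C⁻¹ - C⁻¹ * A' * (A'ᵀ * C⁻¹ * A')⁻¹ * A'ᵀ * C⁻¹ = 0 :=
      sub_eq_zero.mpr (mul_mul_inv_transpose_mul_mul_mul hA' hCinv).symm
    have hdet : (A'ᵀ * C⁻¹ * A')⁻¹.det = C.det * (A'.det ^ 2)⁻¹ := by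
      rw [det_inv_transpose_mul_mul, det_nonsing_inv, Ring.inverse_eq_inv', mul_inv, inv_inv]
    have hCsqrt : √C.det ≠ 0 := (sqrt_pos.mpr hC.det_pos).ne'
    rw [hP, hdet, sub_self, zero_div, rpow_zero, zero_mulVec, dotProduct_zero, mul_zero,
      exp_zero, mul_one, one_mul, sqrt_mul hC.det_pos.le, sqrt_inv, sqrt_sq_eq_abs,
      mul_div_cancel_left₀ _ hCsqrt]

/-- Affine reparametrization of a Gaussian density: for a full-column-rank `A`,
`N_D(Au + b; μ, Σ) = s̃ · N_R(u; μ̃, Σ̃)`, with the stated `Σ̃`, `μ̃`, `P` and `s̃`;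
in the square invertible case the expressions simplify to `Σ̃ = A⁻¹ΣA⁻ᵀ`,
`μ̃ = A⁻¹(μ − b)` and `s̃ = |det A|⁻¹`. -/
theorem stmt_14 (D R : ℕ) (hRD : R ≤ D)
    (C : Matrix (Fin D) (Fin D) ℝ) (hC : C.PosDef)
    (μ b : Fin D → ℝ)
    (A : Matrix (Fin D) (Fin R) ℝ) (hA : A.rank = R)
    (Ct : Matrix (Fin R) (Fin R) ℝ) (hCt : Ct = (Aᵀ * C⁻¹ * A)⁻¹)
    (mt : Fin R → ℝ) (hmt : mt = Ct.mulVec (Aᵀ.mulVec (C⁻¹.mulVec (μ - b))))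
    (P : Matrix (Fin D) (Fin D) ℝ) (hP : P = C⁻¹ - C⁻¹ * A * Ct * Aᵀ * C⁻¹)
    (st : ℝ) (hst : st = (2 * Real.pi) ^ (((R : ℝ) - D) / 2) *
      Real.sqrt Ct.det / Real.sqrt C.det *
      Real.exp (-(1 / 2) * ((μ - b) ⬝ᵥ P.mulVec (μ - b)))) :
    (Aᵀ * C⁻¹ * A).PosDef ∧
    (∀ u : Fin R → ℝ, gaussDensity μ C (A.mulVec u + b) = st * gaussDensity mt Ct u) ∧
    (∀ A' : Matrix (Fin D) (Fin D) ℝ, IsUnit A'.det →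
      (A'ᵀ * C⁻¹ * A')⁻¹ = A'⁻¹ * C * (A'⁻¹)ᵀ ∧
      ((A'ᵀ * C⁻¹ * A')⁻¹).mulVec (A'ᵀ.mulVec (C⁻¹.mulVec (μ - b))) =
        A'⁻¹.mulVec (μ - b) ∧
      (2 * Real.pi) ^ (((D : ℝ) - D) / 2) *
          Real.sqrt ((A'ᵀ * C⁻¹ * A')⁻¹).det / Real.sqrt C.det *
          Real.exp (-(1 / 2) * ((μ - b) ⬝ᵥ
            (C⁻¹ - C⁻¹ * A' * (A'ᵀ * C⁻¹ * A')⁻¹ * A'ᵀ * C⁻¹).mulVec (μ - b))) =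
        |A'.det|⁻¹) :=
  stmt_14_general D R C hC μ b A hA Ct hCt mt hmt P hP st hst
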